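/- arXiv:1808.07437 — 2 statements merged into one kernel-verified Lean document; each statement's English description precedes it below -/
import Mathlib

section
/- Every homogeneous rooted tree T of height at least 2 and with at least one higher node different from the root contains a node μ* distinct from the root such that the subtree rooted at μ* is flat (all its leaves are at depth exactly 2 below μ*). -/
/-- Finite rooted trees: leaves carry labels, internal nodes carry a list of children. -/
inductive RTree (α : Type) : Type where
  | leaf (a : α) : RTree α
  | node (ts : List (RTree α)) : RTree α

namespace RTree
variable {α : Type}

/-- Whether a node is a leaf. -/
def isLeaf : RTree α → Bool
  | leaf _ => true
  | node _ => false

/-- A lower node: an internal node all of whose children are leaves. -/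
def isLower : RTree α → Bool
  | leaf _ => false
  | node ts => ts.all isLeaf

/-- A higher node: an internal node with at least one internal-node child. -/
def isHigher : RTree α → Bool
  | leaf _ => false
  | node ts => ts.any fun t => !isLeaf t

/-- Height: the maximum depth of a node of the tree. -/
def height : RTree α → ℕ
  | leaf _ => 0
  | node ts => (ts.attach.map fun ⟨t, _⟩ => height t + 1).foldr max 0

/-- The list of depths of the leaves of the tree. -/
def leafDepths : RTree α → List ℕ
  | leaf _ => [0]
  | node ts => (ts.attach.map fun ⟨t, _⟩ => (leafDepths t).map (· + 1)).flatten

/-- A tree is flat if all its leaves have depth exactly 2. -/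
def Flat (T : RTree α) : Prop := ∀ d ∈ leafDepths T, d = 2

/-- The labels of the leaves, in left-to-right order. -/
def leafLabels : RTree α → List α
  | leaf a => [a]
  | node ts => (ts.attach.map fun ⟨t, _⟩ => leafLabels t).flatten

/-- The leaves together with their depths, in left-to-right order. -/
def leavesWithDepth : RTree α → List (α × ℕ)
  | leaf a => [(a, 0)]
  | node ts => (ts.attach.map fun ⟨t, _⟩ => (leavesWithDepth t).map fun p => (p.1, p.2 + 1)).flatten

/-- Number of leaves. -/
def leafCount : RTree α → ℕ
  | leaf _ => 1
  | node ts => (ts.attach.map fun ⟨t, _⟩ => leafCount t).sum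

/-- Number of internal nodes. -/
def internalCount : RTree α → ℕ
  | leaf _ => 0
  | node ts => 1 + (ts.attach.map fun ⟨t, _⟩ => internalCount t).sum

/-- Total number of nodes. -/
def nodeCount : RTree α → ℕ
  | leaf _ => 1
  | node ts => 1 + (ts.attach.map fun ⟨t, _⟩ => nodeCount t).sum

/-- Number of higher nodes (including the root if it is higher). -/
def higherCount : RTree α → ℕ
  | leaf _ => 0
  | node ts =>
      (if (node ts : RTree α).isHigher then 1 else 0) +
        (ts.attach.map fun ⟨t, _⟩ => higherCount t).sum

/-- The size S(T): the number of higher nodes different from the root. -/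
def size (T : RTree α) : ℕ := higherCount T - (if T.isHigher then 1 else 0)

/-- A tree is homogeneous if every node's children are all leaves or all internal nodes. -/
inductive Homog : RTree α → Prop where
  | leaf (a : α) : Homog (leaf a)
  | node (ts : List (RTree α)) :
      ((∀ t ∈ ts, isLeaf t = true) ∨ (∀ t ∈ ts, isLeaf t = false)) →
      (∀ t ∈ ts, Homog t) → Homog (node ts)

/-- Every internal node has at least two children. -/
inductive Branching : RTree α → Prop where
  | leaf (a : α) : Branching (leaf a)
  | node (ts : List (RTree α)) : 2 ≤ ts.length → (∀ t ∈ ts, Branching t) → Branching (node ts)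

/-- Every internal node has at least one child. -/
inductive NoEmpty : RTree α → Prop where
  | leaf (a : α) : NoEmpty (leaf a)
  | node (ts : List (RTree α)) : ts ≠ [] → (∀ t ∈ ts, NoEmpty t) → NoEmpty (node ts)

/-- `IsSubtree s t` : `s` occurs as (the subtree rooted at) a node of `t`. -/
inductive IsSubtree (s : RTree α) : RTree α → Prop where
  | refl : IsSubtree s s
  | child {ts : List (RTree α)} {c : RTree α} : c ∈ ts → IsSubtree s c → IsSubtree s (node ts)

/-- `s` occurs as the subtree rooted at a node of `t` different from the root. -/
def IsProperSubtree (s t : RTree α) : Prop :=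
  ∃ ts : List (RTree α), t = node ts ∧ ∃ c ∈ ts, IsSubtree s c

/-- Navigate from the root along a list of child indices. -/
def navigate : RTree α → List ℕ → Option (RTree α)
  | t, [] => some t
  | leaf _, _ :: _ => none
  | node ts, i :: p =>
      match ts[i]? with
      | some c => navigate c p
      | none => none

/-- The number of boundary crossings charged to the leaf at position `p`:
proper ancestors that are non-root higher nodes, excluding the parent of the leaf. -/
def crossCount (T : RTree α) (p : List ℕ) : ℕ :=
  ((List.range p.length).filter fun k =>
    decide (k ≠ 0) && decide (k + 1 ≠ p.length) &&
      ((navigate T (p.take k)).map isHigher).getD false).length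

end RTree


namespace RTree
variable {α : Type}

lemma higherCount_node (ts : List (RTree α)) :
    higherCount (node ts) = (if (node ts : RTree α).isHigher then 1 else 0) +
      (ts.attach.map fun ⟨t, _⟩ => higherCount t).sum := by
  rw [higherCount]

lemma exists_pos_of_sum_attach_pos {ts : List (RTree α)}
    (h : 0 < (ts.attach.map fun ⟨t, _⟩ => higherCount t).sum) :
    ∃ c ∈ ts, 0 < higherCount c := by
  by_contra hc
  push_neg at hc
  have hz : (ts.attach.map fun ⟨t, _⟩ => higherCount t).sum = 0 :=
    List.sum_eq_zero fun x hx => by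
      obtain ⟨⟨t, ht⟩, -, rfl⟩ := List.mem_map.mp hx
      exact Nat.le_antisymm (hc t ht) (Nat.zero_le _)
  omega

lemma mem_leafDepths_node {ts : List (RTree α)} {d : ℕ} :
    d ∈ leafDepths (node ts) ↔ ∃ t ∈ ts, ∃ e ∈ leafDepths t, d = e + 1 := by
  rw [leafDepths]
  rw [List.mem_flatten]
  constructor
  · rintro ⟨l, hl, hd⟩
    obtain ⟨⟨t, ht⟩, -, rfl⟩ := List.mem_map.mp hl
    obtain ⟨e, he, rfl⟩ := List.mem_map.mp hd
    exact ⟨t, ht, e, he, rfl⟩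
  · rintro ⟨t, ht, e, he, rfl⟩
    exact ⟨(leafDepths t).map (· + 1),
      List.mem_map.mpr ⟨⟨t, ht⟩, List.mem_attach _ _, rfl⟩,
      List.mem_map.mpr ⟨e, he, rfl⟩⟩

theorem exists_flat_of_higher : ∀ (T : RTree α), Homog T → isHigher T = true →
    ∃ μ, IsSubtree μ T ∧ Flat μ
  | leaf _, _, hh => by simp [isHigher] at hh
  | node ts, hH, hh => by
    by_cases hc : ∃ c ∈ ts, isHigher c = true
    · obtain ⟨c, hc1, hc2⟩ := hc
      have hHc : Homog c := by cases hH with | node _ _ h => exact h c hc1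
      obtain ⟨μ, hs, hf⟩ := exists_flat_of_higher c hHc hc2
      exact ⟨μ, .child hc1 hs, hf⟩
    · push_neg at hc
      refine ⟨node ts, .refl, ?_⟩
      have hall : ∀ t ∈ ts, isLeaf t = false := by
        cases hH with
        | node _ ho _ =>
          cases ho with
          | inl h =>
            exfalso
            simp only [isHigher, List.any_eq_true] at hh
            obtain ⟨t, ht, ht2⟩ := hh
            rw [h t ht] at ht2
            simp at ht2
          | inr h => exact h
      intro d hd
      rw [mem_leafDepths_node] at hd
      obtain ⟨t, ht, e, he, rfl⟩ := hd
      have hnl := hall t ht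
      have hnh := hc t ht
      obtain ⟨us, rfl⟩ : ∃ us, t = node us := by
        cases t with
        | leaf a => simp [isLeaf] at hnl
        | node us => exact ⟨us, rfl⟩
      have husl : ∀ u ∈ us, isLeaf u = true := by
        intro u hu
        by_contra h
        apply hnh
        simp only [isHigher, List.any_eq_true]
        exact ⟨u, hu, by simp [h]⟩
      rw [mem_leafDepths_node] at he
      obtain ⟨u, hu, f, hf, rfl⟩ := he
      obtain ⟨a, rfl⟩ : ∃ a, u = leaf a := by
        have h := husl u hu
        cases u with
        | leaf a => exact ⟨a, rfl⟩
        | node vs => simp [isLeaf] at h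
      simp only [leafDepths, List.mem_singleton] at hf
      omega
termination_by T => sizeOf T
decreasing_by
  exact Nat.lt_of_lt_of_le (List.sizeOf_lt_of_mem hc1) (by simp)

theorem exists_flat_of_higherCount : ∀ (T : RTree α), Homog T → 0 < higherCount T →
    ∃ μ, IsSubtree μ T ∧ Flat μ
  | leaf _, _, hh => by simp [higherCount] at hh
  | node ts, hH, hh => by
    by_cases hhi : isHigher (node ts : RTree α) = true
    · exact exists_flat_of_higher _ hH hhi
    · rw [higherCount_node, if_neg hhi] at hh
      have hsum : 0 < (ts.attach.map fun ⟨t, _⟩ => higherCount t).sum := by omega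
      obtain ⟨c, hc1, hc2⟩ := exists_pos_of_sum_attach_pos hsum
      have hHc : Homog c := by cases hH with | node _ _ h => exact h c hc1
      obtain ⟨μ, hs, hf⟩ := exists_flat_of_higherCount c hHc hc2
      exact ⟨μ, .child hc1 hs, hf⟩
termination_by T => sizeOf T
decreasing_by
  exact Nat.lt_of_lt_of_le (List.sizeOf_lt_of_mem hc1) (by simp)

end RTree

open RTree in
/-- Every homogeneous rooted tree of height at least 2 with at least one higher node
different from the root contains a non-root node whose subtree is flat. -/
theorem homogeneous_tree_has_proper_flat_subtree {α : Type} (T : RTree α)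
    (hHomog : Homog T) (hHeight : 2 ≤ height T) (hSize : 0 < size T) :
    ∃ μ : RTree α, IsProperSubtree μ T ∧ Flat μ := by
  cases T with
  | leaf a => simp [size, higherCount, isHigher] at hSize
  | node ts =>
    have hsum : 0 < (ts.attach.map fun ⟨t, _⟩ => higherCount t).sum := by
      have h2 : size (node ts : RTree α) = higherCount (node ts : RTree α) -
          (if (node ts : RTree α).isHigher then 1 else 0) := rfl
      rw [h2, higherCount_node] at hSize
      split at hSize <;> omega
    obtain ⟨c, hc1, hc2⟩ := exists_pos_of_sum_attach_pos hsum
    have hHc : Homog c := by cases hHomog with | node _ _ h => exact h c hc1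
    obtain ⟨μ, hs, hf⟩ := exists_flat_of_higherCount c hHc hc2
    exact ⟨μ, ⟨ts, rfl, c, hc1, hs⟩, hf⟩
end

section
/- Let T_i be a rooted tree, let μ* be a non-root node of T_i with parent ν, and let T_{i+1} be obtained from T_i by deleting μ*, attaching all children of μ* directly to ν, and adding two new leaf-parent children χ and φ to ν (each with some new leaf children). If T_i is homogeneous and all children of μ* are internal nodes whose children are leaves, then T_{i+1} is homogeneous. -/
namespace RTree
variable {α : Type}

/-- One step of the flattening transformation: somewhere in the tree, a non-root node `μ*`
(= `node cs`, with a nonempty list of children, each of which is a lower node) is deleted,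
its children are attached to its parent `ν`, and two new lower-node children `χ` and `φ`
(with new, nonempty, lists of leaf children) are added to `ν`. -/
inductive Step : RTree α → RTree α → Prop where
  | here (pre post cs : List (RTree α)) (ls1 ls2 : List α)
      (hcs : ∀ c ∈ cs, ∃ ls : List α, ls ≠ [] ∧ c = node (ls.map leaf))
      (hne : cs ≠ []) (h1 : ls1 ≠ []) (h2 : ls2 ≠ []) :
      Step (node (pre ++ node cs :: post))
           (node (pre ++ cs ++ post ++ [node (ls1.map leaf), node (ls2.map leaf)]))
  | deeper (pre post : List (RTree α)) (t t' : RTree α) :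
      Step t t' → Step (node (pre ++ t :: post)) (node (pre ++ t' :: post))

end RTree

namespace RTree

lemma Step.isLeaf_left {α : Type} {t t' : RTree α} (h : Step t t') : isLeaf t = false := by
  cases h <;> rfl

lemma Step.isLeaf_right {α : Type} {t t' : RTree α} (h : Step t t') : isLeaf t' = false := by
  cases h <;> rfl

lemma homog_node_of_leaves {α : Type} (ls : List α) : Homog (node (ls.map leaf)) := by
  refine Homog.node _ (Or.inl ?_) ?_ <;> intro t ht <;>
    · simp only [List.mem_map] at ht
      obtain ⟨a, _, rfl⟩ := ht
      first | rfl | exact Homog.leaf a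

end RTree

open RTree in
/-- If `T` is homogeneous and `T'` is obtained from `T` by deleting a non-root node `μ*`
all of whose children are lower nodes, attaching those children to the parent of `μ*` and
adding two new lower-node children to that parent, then `T'` is homogeneous. -/
theorem step_preserves_homogeneous {α : Type} {T T' : RTree α}
    (hStep : Step T T') (hHomog : Homog T) : Homog T' := by
  induction hStep with
  | here pre post cs ls1 ls2 hcs hne h1 h2 =>
    cases hHomog with
    | node ts hdisj hall =>
      have hint : ∀ t ∈ pre ++ node cs :: post, isLeaf t = false := by
        rcases hdisj with hL | hI
        · have := hL (node cs) (by simp)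
          simp [isLeaf] at this
        · exact hI
      refine Homog.node _ (Or.inr ?_) ?_
      · intro t ht
        simp only [List.append_assoc, List.mem_append, List.mem_cons,
          List.mem_singleton, List.not_mem_nil, or_false] at ht
        rcases ht with ht | ht | ht | rfl | rfl
        · exact hint t (by simp [ht])
        · obtain ⟨ls, -, rfl⟩ := hcs t ht
          rfl
        · exact hint t (by simp [ht])
        · rfl
        · rfl
      · intro t ht
        simp only [List.append_assoc, List.mem_append, List.mem_cons,
          List.mem_singleton, List.not_mem_nil, or_false] at ht
        rcases ht with ht | ht | ht | rfl | rfl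
        · exact hall t (by simp [ht])
        · obtain ⟨ls, -, rfl⟩ := hcs t ht
          exact homog_node_of_leaves ls
        · exact hall t (by simp [ht])
        · exact homog_node_of_leaves ls1
        · exact homog_node_of_leaves ls2
  | deeper pre post t t' hstep ih =>
    cases hHomog with
    | node ts hdisj hall =>
      have ht' : Homog t' := ih (hall t (by simp))
      refine Homog.node _ (Or.inr ?_) ?_
      · intro s hs
        simp only [List.mem_append, List.mem_cons] at hs
        have hint : ∀ u ∈ pre ++ t :: post, isLeaf u = false := by
          rcases hdisj with hL | hI
          · have := hL t (by simp)
            rw [hstep.isLeaf_left] at this; exact absurd this (by simp)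
          · exact hI
        rcases hs with hs | rfl | hs
        · exact hint s (by simp [hs])
        · exact hstep.isLeaf_right
        · exact hint s (by simp [hs])
      · intro s hs
        simp only [List.mem_append, List.mem_cons] at hs
        rcases hs with hs | rfl | hs
        · exact hall s (by simp [hs])
        · exact ht'
        · exact hall s (by simp [hs])
end
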